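/- Let G be a simple graph of order n ≥ 2. Then G is the paired coalition graph PCG(T, π) of some tree T with respect to some pc-partition π of T if and only if G is isomorphic to the star K_{1,n−1}. -/

import Mathlib

namespace PCPaper

variable {V : Type*}

/-- `S` is a dominating set of `G`. -/
def IsDomSet (G : SimpleGraph V) (S : Set V) : Prop :=
  ∀ v : V, v ∈ S ∨ ∃ u ∈ S, G.Adj u v

/-- `S` is a paired dominating set of `G`: a dominating set such that the subgraph of `G`
induced by `S` contains a perfect matching (a matching whose vertex set is exactly `S`). -/
def IsPairedDomSet (G : SimpleGraph V) (S : Set V) : Prop :=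
  IsDomSet G S ∧ ∃ M : G.Subgraph, M.verts = S ∧ M.IsMatching

/-- Disjoint sets `A`, `B`, neither a paired dominating set, whose union is one. -/
def PairedCoalition (G : SimpleGraph V) (A B : Set V) : Prop :=
  Disjoint A B ∧ ¬ IsPairedDomSet G A ∧ ¬ IsPairedDomSet G B ∧ IsPairedDomSet G (A ∪ B)

variable [Fintype V] [DecidableEq V]

/-- `π` is a paired coalition partition of `G`: no part is a paired dominating set and every
part forms a paired coalition with some other part. -/
def IsPCPartition (G : SimpleGraph V) (π : Finpartition (Finset.univ : Finset V)) : Prop :=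
  ∀ A ∈ π.parts, ¬ IsPairedDomSet G (A : Set V) ∧
    ∃ B ∈ π.parts, B ≠ A ∧ PairedCoalition G (A : Set V) (B : Set V)

/-- The paired coalition number: the maximum number of parts of a pc-partition of `G`,
and `0` if `G` admits no pc-partition. -/
noncomputable def pcNumber (G : SimpleGraph V) : ℕ :=
  sSup {k | ∃ π : Finpartition (Finset.univ : Finset V), IsPCPartition G π ∧ π.parts.card = k}

/-- The paired coalition graph of a partition `π` of `G`: vertices are the parts of `π`,
two parts being adjacent iff they form a paired coalition in `G`. -/
def PCG (G : SimpleGraph V) (π : Finpartition (Finset.univ : Finset V)) :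
    SimpleGraph {A : Finset V // A ∈ π.parts} where
  Adj A B := PairedCoalition G ((A : Finset V) : Set V) ((B : Finset V) : Set V)
  symm := by
    constructor
    rintro A B ⟨h1, h2, h3, h4⟩
    exact ⟨h1.symm, h3, h2, by rwa [Set.union_comm]⟩
  loopless := by
    constructor
    rintro A ⟨h1, h2, h3, h4⟩
    exact h2 (by rwa [Set.union_self] at h4)

end PCPaper

/-! The neighbour of a leaf lies in every paired dominating set: the leaf is either in the set,
and then matched to its only neighbour, or dominated by it. In a pc-partition of a tree every
coalition therefore involves the part containing that neighbour, while every other part has a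
coalition partner, which can only be that part; so the coalition graph is a star centred there.
Conversely, a star is a tree, and its partition into singletons is a pc-partition because the
centre together with any other vertex is a paired dominating set. -/

open SimpleGraph Finset

namespace SimpleGraph

variable {V : Type*} {G : SimpleGraph V}

lemma IsTree.exists_neighborSet_eq_singleton [Finite V] [Nontrivial V] (hG : G.IsTree) :
    ∃ v u, G.neighborSet v = {u} := by
  classical
  have := Fintype.ofFinite V
  obtain ⟨v, hv⟩ := hG.exists_vert_degree_one_of_nontrivial
  obtain ⟨u, hu, huniq⟩ := degree_eq_one_iff_existsUnique_adj.1 hv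
  exact ⟨v, u, Set.ext fun w => ⟨huniq w, fun hw => hw ▸ hu⟩⟩

def completeBipartiteGraphIsoStarGraph [DecidableEq V] (r : V) :
    completeBipartiteGraph {v // v = r} {v // ¬ v = r} ≃g starGraph r where
  __ := Equiv.sumCompl (· = r)
  map_rel_iff' := by
    rintro (⟨a, rfl⟩ | ⟨a, ha⟩) (⟨b, rfl⟩ | ⟨b, hb⟩) <;> simp [*, Ne.symm]

lemma nonempty_starGraph_iso [Fintype V] [DecidableEq V] (r : V) :
    Nonempty (starGraph r ≃g completeBipartiteGraph (Fin 1) (Fin (Fintype.card V - 1))) := by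
  have hcompl : Fintype.card {v // ¬ v = r} = Fintype.card V - 1 := by
    rw [Fintype.card_subtype_compl, Fintype.card_subtype_eq]
  exact ⟨(completeBipartiteGraphCongr (Equiv.ofUnique (Fin 1) {v // v = r})
    (Fintype.equivFinOfCardEq hcompl).symm |>.trans (completeBipartiteGraphIsoStarGraph r)).symm⟩

end SimpleGraph

namespace PCPaper

variable {V : Type*} {G : SimpleGraph V}

lemma PairedCoalition.symm {A B : Set V} (h : PairedCoalition G A B) : PairedCoalition G B A :=
  ⟨h.1.symm, h.2.2.1, h.2.1, Set.union_comm A B ▸ h.2.2.2⟩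

lemma not_isPairedDomSet_singleton (a : V) : ¬ IsPairedDomSet G {a} := by
  rintro ⟨-, M, hMv, hM⟩
  obtain ⟨w, hw, -⟩ := hM (hMv ▸ rfl : a ∈ M.verts)
  have hwa : w = a := by simpa [hMv] using M.edge_vert hw.symm
  exact (M.adj_sub hw).ne hwa.symm

lemma isPairedDomSet_pair_of_isUniversal {r a : V} (hr : G.IsUniversal r) (hra : r ≠ a) :
    IsPairedDomSet G {r, a} := by
  refine ⟨fun w => ?_, G.subgraphOfAdj (hr hra), by simp, .subgraphOfAdj _⟩
  by_cases hw : r = w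
  · exact .inl (.inl hw.symm)
  · exact .inr ⟨r, .inl rfl, hr hw⟩

lemma IsPairedDomSet.mem_of_neighborSet_eq_singleton {S : Set V} (hS : IsPairedDomSet G S)
    {u v : V} (hv : G.neighborSet v = {u}) : u ∈ S := by
  have hadj : ∀ {w}, G.Adj v w → w = u := fun {w} hw => (hv ▸ (G.mem_neighborSet v w).2 hw :)
  by_cases hvS : v ∈ S
  · obtain ⟨M, hMv, hM⟩ := hS.2
    obtain ⟨w, hw, -⟩ := hM (hMv ▸ hvS)
    exact hadj (M.adj_sub hw) ▸ hMv ▸ M.edge_vert hw.symm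
  · obtain ⟨w, hwS, hw⟩ := (hS.1 v).resolve_left hvS
    exact hadj hw.symm ▸ hwS

variable [Fintype V] [DecidableEq V]

lemma isPCPartition_bot_of_isUniversal [Nontrivial V] {r : V} (hr : G.IsUniversal r) :
    IsPCPartition G (⊥ : Finpartition (univ : Finset V)) := by
  have hcoal : ∀ {a}, r ≠ a → PairedCoalition G {r} {a} := fun hra =>
    ⟨Set.disjoint_singleton.2 hra, not_isPairedDomSet_singleton r,
      not_isPairedDomSet_singleton _, isPairedDomSet_pair_of_isUniversal hr hra⟩
  intro A hA
  obtain ⟨a, -, rfl⟩ := Finpartition.mem_bot_iff.1 hA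
  refine ⟨by simpa using not_isPairedDomSet_singleton a, ?_⟩
  obtain ⟨b, hb⟩ := exists_ne a
  by_cases har : r = a
  · subst har
    exact ⟨{b}, Finpartition.mem_bot_iff.2 ⟨b, mem_univ b, rfl⟩, by simpa using hb,
      by simpa using hcoal (Ne.symm hb)⟩
  · exact ⟨{r}, Finpartition.mem_bot_iff.2 ⟨r, mem_univ r, rfl⟩, by simpa using har,
      by simpa using (hcoal har).symm⟩

lemma pcg_eq_starGraph_of_forall_mem {π : Finpartition (univ : Finset V)}
    (hπ : IsPCPartition G π) {u : V} (hu : ∀ S, IsPairedDomSet G S → u ∈ S) :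
    PCG G π = starGraph ⟨π.part u, π.part_mem.2 (mem_univ u)⟩ := by
  set p : {A // A ∈ π.parts} := ⟨π.part u, π.part_mem.2 (mem_univ u)⟩
  have eq_p : ∀ {A : {A // A ∈ π.parts}}, u ∈ (A : Finset V) → A = p := fun {A} huA =>
    Subtype.ext ((π.part_eq_iff_mem A.2).2 huA).symm
  have center : ∀ {A B}, (PCG G π).Adj A B → A = p ∨ B = p := fun hAB =>
    (hu _ hAB.2.2.2).imp (fun h => eq_p (by simpa using h)) (fun h => eq_p (by simpa using h))
  have adj_p : ∀ {A}, A ≠ p → (PCG G π).Adj A p := fun {A} hA => by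
    obtain ⟨-, D, hD, -, hcoal⟩ := hπ A A.2
    have hAD : (PCG G π).Adj A ⟨D, hD⟩ := hcoal
    exact (center hAD).resolve_left hA ▸ hAD
  ext A B
  rw [starGraph_adj]
  refine ⟨fun hAB => ⟨hAB.ne, center hAB⟩, ?_⟩
  rintro ⟨hne, rfl | rfl⟩
  exacts [(adj_p hne.symm).symm, adj_p hne]

lemma nonempty_pcg_iso_of_isTree [Nontrivial V] (hG : G.IsTree)
    {π : Finpartition (univ : Finset V)} (hπ : IsPCPartition G π) :
    Nonempty (PCG G π ≃g completeBipartiteGraph (Fin 1) (Fin (#π.parts - 1))) := by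
  obtain ⟨v, u, hv⟩ := hG.exists_neighborSet_eq_singleton
  rw [pcg_eq_starGraph_of_forall_mem hπ fun S hS => hS.mem_of_neighborSet_eq_singleton hv,
    ← Fintype.card_coe]
  exact nonempty_starGraph_iso _

end PCPaper

open PCPaper in
/-- A graph of order `n ≥ 2` is the paired coalition graph of some tree with respect to
some pc-partition iff it is isomorphic to the star `K_{1,n-1}`. -/
theorem stmt_13 {W : Type*} [Fintype W] (G : SimpleGraph W) (n : ℕ)
    (hn : Fintype.card W = n) (h2 : 2 ≤ n) :
    (∃ (m : ℕ) (T : SimpleGraph (Fin m)) (π : Finpartition (Finset.univ : Finset (Fin m))),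
        T.IsTree ∧ IsPCPartition T π ∧ Nonempty (G ≃g PCG T π)) ↔
    Nonempty (G ≃g completeBipartiteGraph (Fin 1) (Fin (n - 1))) := by
  constructor
  · rintro ⟨m, T, π, hT, hπ, ⟨φ⟩⟩
    have hparts : #π.parts = n := by
      rw [← hn, Fintype.card_congr φ.toEquiv, Fintype.card_coe]
    have : Nontrivial (Fin m) := Fin.nontrivial_iff_two_le.2 <| by
      have := π.card_parts_le_card
      simp only [hparts, card_univ, Fintype.card_fin] at this
      omega
    obtain ⟨ψ⟩ := nonempty_pcg_iso_of_isTree hT hπ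
    exact ⟨φ.trans (hparts ▸ ψ)⟩
  · rintro ⟨φ⟩
    have : Nontrivial (Fin n) := Fin.nontrivial_iff_two_le.2 h2
    let r : Fin n := ⟨0, by omega⟩
    have hπ := isPCPartition_bot_of_isUniversal (isUniversal_starGraph_self (r := r))
    obtain ⟨ψ⟩ := nonempty_pcg_iso_of_isTree (isTree_starGraph r) hπ
    rw [Finpartition.card_bot, card_univ, Fintype.card_fin] at ψ
    exact ⟨n, starGraph r, ⊥, isTree_starGraph r, hπ, ⟨φ.trans ψ.symm⟩⟩
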